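/- arXiv:2509.13897 — 3 statements merged into one kernel-verified Lean document; each statement's English description precedes it below -/
import Mathlib

section
/- Let P be a real polynomial of degree n ≥ 1 with only simple real negative zeros, positive leading coefficient, and let s > 0, α > 0 with s - α - n < 0. Define P̂(x) = x(1-x)P'(x) + (x(s-α)+α)P(x). Then P̂ has degree n+1, exactly n of its zeros are real and negative, and exactly one zero is real and greater than 1. -/
/-!
With `x 0 > x 1 > ⋯` the zeros of `P`, the value `Q (x k) = x k (1 - x k) P' (x k)` has the
sign of `-(-1)^k`, while `Q 0 = α P 0 > 0`. So `Q` alternates in sign along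
`0 > x 0 > x 1 > ⋯`, and the intermediate value theorem gives `n` distinct negative zeros.
Moreover `Q 1 = s P 1 > 0` and the leading coefficient of `Q` is `c (s - α - n) < 0`, so `Q` has
one more zero beyond `1`. These `n + 1` distinct zeros account for all of `Q`, which has
degree `n + 1`.
-/

open Polynomial Finset Filter Lagrange

theorem exists_mem_Ioo_eq_zero_of_mul_neg {α : Type*} [ConditionallyCompleteLinearOrder α]
    [TopologicalSpace α] [OrderTopology α] [DenselyOrdered α] {f : α → ℝ} {a b : α}
    (hab : a ≤ b) (hf : ContinuousOn f (Set.Icc a b)) (h : f a * f b < 0) :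
    ∃ r ∈ Set.Ioo a b, f r = 0 := by
  rcases (show f a ≠ 0 by rintro h'; simp [h'] at h).lt_or_gt with ha | ha
  · exact intermediate_value_Ioo hab hf ⟨ha, by nlinarith⟩
  · exact intermediate_value_Ioo' hab hf ⟨by nlinarith, ha⟩

theorem exists_strictAnti_zeros_of_alternating_signs {α : Type*}
    [ConditionallyCompleteLinearOrder α] [TopologicalSpace α] [OrderTopology α]
    [DenselyOrdered α] {f : α → ℝ} (hf : Continuous f) {m : ℕ} {y : Fin (m + 1) → α}
    (hy : StrictAnti y) (hsign : ∀ k : Fin (m + 1), 0 < (-1) ^ (k : ℕ) * f (y k)) :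
    ∃ r : Fin m → α, StrictAnti r ∧
      ∀ k, r k ∈ Set.Ioo (y k.succ) (y k.castSucc) ∧ f (r k) = 0 := by
  have hzero : ∀ k : Fin m, ∃ r ∈ Set.Ioo (y k.succ) (y k.castSucc), f r = 0 := by
    intro k
    have hsq : ((-1 : ℝ) ^ (k : ℕ)) ^ 2 = 1 := by rw [← pow_mul, mul_comm, pow_mul]; simp
    have hprod : (-1) ^ ((k : ℕ) + 1) * f (y k.succ) * ((-1) ^ (k : ℕ) * f (y k.castSucc))
        = -(f (y k.succ) * f (y k.castSucc)) := by
      linear_combination (-(f (y k.succ) * f (y k.castSucc))) * hsq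
    refine exists_mem_Ioo_eq_zero_of_mul_neg (hy Fin.castSucc_lt_succ).le
      hf.continuousOn (neg_pos.1 ?_)
    rw [← hprod]
    exact mul_pos (hsign k.succ) (hsign k.castSucc)
  choose r hr_mem hr_zero using hzero
  refine ⟨r, fun k l hkl => ?_, fun k => ⟨hr_mem k, hr_zero k⟩⟩
  calc r l < y l.castSucc := (hr_mem l).2
    _ ≤ y k.succ := hy.antitone (Fin.castSucc_lt_iff_succ_le.1 hkl)
    _ < r k := (hr_mem k).1

theorem Lagrange.neg_one_pow_mul_eval_derivative_nodal_pos {K : Type*} [Field K] [LinearOrder K]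
    [IsStrictOrderedRing K] {n : ℕ} {x : Fin n → K} (hx : StrictAnti x) (k : Fin n) :
    0 < (-1) ^ (k : ℕ) * eval (x k) (derivative (nodal univ x)) := by
  have hsplit : univ.erase k = Iio k ∪ Ioi k := by
    ext j
    simp only [mem_erase, mem_univ, and_true, mem_union, mem_Iio, mem_Ioi]
    exact ne_iff_lt_or_gt
  have hdisj : Disjoint (Iio k) (Ioi k) :=
    disjoint_left.2 fun j hjk hkj => lt_asymm (mem_Iio.1 hjk) (mem_Ioi.1 hkj)
  -- exactly the `k` factors with `j < k` are negative
  have hbelow : ∏ j ∈ Iio k, (x k - x j) = (-1) ^ (k : ℕ) * ∏ j ∈ Iio k, (x j - x k) := by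
    rw [← Fin.card_Iio k, ← prod_neg]; simp
  rw [eval_nodal_derivative_eval_node_eq (mem_univ k), eval_nodal, hsplit, prod_union hdisj,
    hbelow, ← mul_assoc, ← mul_assoc, ← pow_add, Even.neg_one_pow ⟨_, rfl⟩, one_mul]
  exact mul_pos (prod_pos fun j hj => sub_pos.2 (hx (mem_Iio.1 hj)))
    (prod_pos fun j hj => sub_pos.2 (hx (mem_Ioi.1 hj)))

namespace Polynomial

theorem exists_isRoot_gt_of_leadingCoeff_neg {p : ℝ[X]} (hdeg : 0 < p.degree)
    (hlc : p.leadingCoeff < 0) {a : ℝ} (ha : 0 < p.eval a) : ∃ r, a < r ∧ p.IsRoot r := by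
  obtain ⟨t, hat, ht⟩ := ((eventually_ge_atTop a).and
    ((p.tendsto_atBot_of_leadingCoeff_nonpos hdeg hlc.le).eventually
      (eventually_lt_atBot 0))).exists
  obtain ⟨r, hr, hr0⟩ := intermediate_value_Ioo' hat p.continuous.continuousOn ⟨ht, ha⟩
  exact ⟨r, hr.1, hr0⟩

theorem eq_C_leadingCoeff_mul_prod_X_sub_C {R : Type*} [CommRing R] [IsDomain R] {p : R[X]}
    {d : ℕ} (hp : p.natDegree = d) {z : Fin d → R} (hz : Function.Injective z)
    (hroot : ∀ i, p.IsRoot (z i)) : p = C p.leadingCoeff * ∏ i, (X - C (z i)) := by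
  rcases eq_or_ne p 0 with rfl | hp0
  · simp
  have hroots : p.roots = (univ.map ⟨z, hz⟩).val :=
    roots_eq_of_natDegree_le_card_of_ne_zero (by simpa using hroot) (by simp [hp]) hp0
  conv_lhs => rw [← C_leadingCoeff_mul_prod_multiset_X_sub_C (p := p) (by simp [hroots, hp])]
  rw [hroots, ← Finset.prod_eq_multiset_prod, prod_map]
  rfl

noncomputable def hatTransform (s α : ℝ) (P : ℝ[X]) : ℝ[X] :=
  X * (1 - X) * derivative P + (C (s - α) * X + C α) * P

theorem eval_zero_hatTransform (s α : ℝ) (P : ℝ[X]) :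
    (hatTransform s α P).eval 0 = α * P.eval 0 := by
  simp [hatTransform]

theorem eval_one_hatTransform (s α : ℝ) (P : ℝ[X]) :
    (hatTransform s α P).eval 1 = s * P.eval 1 := by
  simp [hatTransform]

theorem eval_hatTransform_of_isRoot (s α : ℝ) {P : ℝ[X]} {t : ℝ} (ht : P.IsRoot t) :
    (hatTransform s α P).eval t = t * (1 - t) * (derivative P).eval t := by
  simp [hatTransform, ht.eq_zero]

theorem coeff_X_mul_derivative {R : Type*} [Semiring R] (p : R[X]) (k : ℕ) :
    (X * derivative p).coeff k = k * p.coeff k := by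
  cases k with
  | zero => simp
  | succ k => rw [coeff_X_mul, coeff_derivative, ← Nat.cast_succ, Nat.cast_comm]

theorem coeff_hatTransform_succ (s α : ℝ) (P : ℝ[X]) (k : ℕ) :
    (hatTransform s α P).coeff (k + 1)
      = (k + 1 + α) * P.coeff (k + 1) + (s - α - k) * P.coeff k := by
  have h : hatTransform s α P
      = X * derivative P - X * (X * derivative P) + C (s - α) * (X * P) + C α * P := by
    rw [hatTransform]; ring
  simp only [h, coeff_add, coeff_sub, coeff_C_mul, coeff_X_mul, coeff_X_mul_derivative,
    coeff_derivative]
  ring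

theorem natDegree_hatTransform {s α : ℝ} {P : ℝ[X]} (hP : P ≠ 0)
    (hs : s - α - P.natDegree ≠ 0) :
    (hatTransform s α P).natDegree = P.natDegree + 1 ∧
      (hatTransform s α P).leadingCoeff = (s - α - P.natDegree) * P.leadingCoeff := by
  have htop : (hatTransform s α P).coeff (P.natDegree + 1)
      = (s - α - P.natDegree) * P.leadingCoeff := by
    rw [coeff_hatTransform_succ, coeff_eq_zero_of_natDegree_lt (Nat.lt_succ_self _), mul_zero,
      zero_add, leadingCoeff]
  have hdeg : (hatTransform s α P).natDegree = P.natDegree + 1 := by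
    refine natDegree_eq_of_le_of_coeff_ne_zero ?_ ?_
    · refine natDegree_le_iff_coeff_eq_zero.2 fun N hN => ?_
      obtain ⟨k, rfl⟩ := Nat.exists_eq_add_of_lt hN
      rw [coeff_hatTransform_succ, coeff_eq_zero_of_natDegree_lt (n := P.natDegree + 1 + k + 1)
        (by omega), coeff_eq_zero_of_natDegree_lt (n := P.natDegree + 1 + k) (by omega)]
      ring
    · rw [htop]; exact mul_ne_zero hs (leadingCoeff_ne_zero.2 hP)
  exact ⟨hdeg, by rw [leadingCoeff, hdeg, htop]⟩

theorem neg_one_pow_mul_eval_cons_hatTransform_pos {s α c : ℝ} (hα : 0 < α)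
    (hc : 0 < c) {n : ℕ} {x : Fin n → ℝ} (hx : StrictAnti x) (hxneg : ∀ i, x i < 0)
    (k : Fin (n + 1)) :
    0 < (-1) ^ (k : ℕ) *
      eval ((Fin.cons 0 x : Fin (n + 1) → ℝ) k) (hatTransform s α (C c * nodal univ x)) := by
  induction k using Fin.cases with
  | zero =>
    rw [Fin.cons_zero, Fin.val_zero, pow_zero, one_mul, eval_zero_hatTransform, eval_C_mul,
      eval_nodal]
    exact mul_pos hα (mul_pos hc (prod_pos fun i _ => by linarith [hxneg i]))
  | succ k =>
    have hroot : (C c * nodal univ x).IsRoot (x k) := by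
      rw [IsRoot, eval_C_mul, eval_nodal_at_node (mem_univ k), mul_zero]
    rw [Fin.cons_succ, Fin.val_succ, eval_hatTransform_of_isRoot _ _ hroot, derivative_C_mul,
      eval_C_mul]
    have hk := neg_one_pow_mul_eval_derivative_nodal_pos hx k
    have hxk := hxneg k
    calc (0 : ℝ)
        < -x k * (1 - x k) * c * ((-1) ^ (k : ℕ) * eval (x k) (derivative (nodal univ x))) :=
          mul_pos (mul_pos (mul_pos (by linarith) (by linarith)) hc) hk
      _ = _ := by ring

end Polynomial

theorem stmt_6_general (n : ℕ) (c : ℝ) (hc : 0 < c) (x : Fin n → ℝ)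
    (hxneg : ∀ i, x i < 0) (hxmono : ∀ i j : Fin n, i < j → x j < x i)
    (s α : ℝ) (hs : 0 < s) (hα : 0 < α) (hsan : s - α - n < 0)
    (P Q : Polynomial ℝ) (hP : P = C c * ∏ i, (X - C (x i)))
    (hQ : Q = X * (1 - X) * P.derivative + (C (s - α) * X + C α) * P) :
    Q.natDegree = n + 1 ∧
    ∃ z : Fin (n + 1) → ℝ,
      Q = C Q.leadingCoeff * ∏ i, (X - C (z i)) ∧
      ∃ j : Fin (n + 1), 1 < z j ∧ ∀ i, i ≠ j → z i < 0 := by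
  have hx : StrictAnti x := fun i j h => hxmono i j h
  replace hQ : Q = hatTransform s α (C c * nodal univ x) := by rw [hQ, hP, hatTransform, nodal_eq]
  have hPdeg : (C c * nodal univ x).natDegree = n := by
    rw [natDegree_C_mul hc.ne', natDegree_nodal, card_univ, Fintype.card_fin]
  have hPlc : (C c * nodal univ x).leadingCoeff = c := by
    rw [leadingCoeff_mul, leadingCoeff_C, nodal_monic.leadingCoeff, mul_one]
  obtain ⟨hQdeg, hQlc⟩ := natDegree_hatTransform (s := s) (α := α)
    (mul_ne_zero (C_ne_zero.2 hc.ne') nodal_monic.ne_zero) (by rw [hPdeg]; exact hsan.ne)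
  rw [← hQ, hPdeg] at hQdeg hQlc
  rw [hPlc] at hQlc
  have hy : StrictAnti (Fin.cons 0 x : Fin (n + 1) → ℝ) :=
    (Fin.strictMono_cons (α := ℝᵒᵈ)).2 ⟨hxneg, hx⟩
  obtain ⟨r, hr_anti, hr⟩ := exists_strictAnti_zeros_of_alternating_signs Q.continuous hy
    (hQ ▸ neg_one_pow_mul_eval_cons_hatTransform_pos hα hc hx hxneg)
  have hr_neg : ∀ k, r k < 0 := fun k =>
    (hr k).1.2.trans_le (hy.antitone (Fin.zero_le _))
  obtain ⟨r₀, hr₀, hr₀_root⟩ := Q.exists_isRoot_gt_of_leadingCoeff_neg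
    (natDegree_pos_iff_degree_pos.1 (hQdeg ▸ n.succ_pos))
    (by rw [hQlc]; exact mul_neg_of_neg_of_pos hsan hc)
    (show 0 < Q.eval 1 by
      rw [hQ, eval_one_hatTransform, eval_C_mul, eval_nodal]
      exact mul_pos hs (mul_pos hc (prod_pos fun i _ => by linarith [hxneg i])))
  refine ⟨hQdeg, Fin.cons r₀ r, eq_C_leadingCoeff_mul_prod_X_sub_C hQdeg ?_ ?_, 0, hr₀, ?_⟩
  · exact Fin.cons_injective_iff.2
      ⟨fun ⟨k, hk⟩ => (hr_neg k).not_ge (hk ▸ by linarith), hr_anti.injective⟩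
  · exact Fin.cases hr₀_root fun k => (hr k).2
  · intro i hi
    obtain ⟨k, rfl⟩ := Fin.exists_succ_eq.2 hi
    exact hr_neg k

theorem stmt_6 (n : ℕ) (hn : 1 ≤ n) (c : ℝ) (hc : 0 < c) (x : Fin n → ℝ)
    (hxneg : ∀ i, x i < 0) (hxmono : ∀ i j : Fin n, i < j → x j < x i)
    (s α : ℝ) (hs : 0 < s) (hα : 0 < α) (hsan : s - α - n < 0)
    (P Q : Polynomial ℝ) (hP : P = C c * ∏ i, (X - C (x i)))
    (hQ : Q = X * (1 - X) * P.derivative + (C (s - α) * X + C α) * P) :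
    Q.natDegree = n + 1 ∧
    ∃ z : Fin (n + 1) → ℝ,
      Q = C Q.leadingCoeff * ∏ i, (X - C (z i)) ∧
      ∃ j : Fin (n + 1), 1 < z j ∧ ∀ i, i ≠ j → z i < 0 :=
  stmt_6_general n c hc x hxneg hxmono s α hs hα hsan P Q hP hQ
end

section
/- Suppose m ≥ 1, a + m < 1, and α_j > 0 for j = 1,…,m. Then all zeros of the polynomial ŵ(x) = (1-x)^{m+a} · ∑_{k=0}^∞ (k+α₁)⋯(k+α_m) · ((a)_k/k!) x^k are real and lie in the open interval (0,1). -/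
/-
Let S_j(x) = ∑ₖ (k+α₁)⋯(k+α_j) (a)ₖ/k! xᵏ. Then S₀ = (1-x)^(-a) is the binomial series and
S_{j+1} = (x d/dx + α_{j+1}) S_j, so S_j = (1-x)^(-(j+a)) ŵ_j with ŵ₀ = 1 and
  ŵ_{j+1} = x(1-x) ŵ_j' + ((j+a)x + α_{j+1}(1-x)) ŵ_j,
a polynomial of degree ≤ j+1. The identity is one of formal power series, so the only analytic
input is the binomial series.

The same recursion reads
  (t^α (1-t)^(-(j+a)) ŵ_j(t))' = t^(α-1) (1-t)^(-(j+a)-1) ŵ_{j+1}(t),   α = α_{j+1}.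
When j + a < 0 and α > 0, the function being differentiated vanishes at 0, at 1 and at the j
zeros of ŵ_j in (0,1), so Rolle's theorem gives j+1 distinct zeros of ŵ_{j+1} in (0,1); by
degree these are all of its zeros.
-/

open Polynomial

/-- Pochhammer symbol (rising factorial) `(a)_n` for real `a`. -/
noncomputable def asc (a : ℝ) (n : ℕ) : ℝ := (ascPochhammer ℝ n).eval a

open Set

section CommRing

variable {R : Type*} [CommRing R]

lemma coeff_X_mul_derivative_add_C_mul (f : PowerSeries R) (c : R) (k : ℕ) :
    PowerSeries.coeff k (PowerSeries.X * PowerSeries.derivative R f + PowerSeries.C c * f)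
      = (k + c) * PowerSeries.coeff k f := by
  rcases k with _ | k
  · simp
  · rw [map_add, PowerSeries.coeff_succ_X_mul, PowerSeries.coeff_derivative,
      PowerSeries.coeff_C_mul]
    push_cast
    ring

lemma HasSum.coeff_mul_coe_mul_pow [TopologicalSpace R] [IsTopologicalRing R]
    {f : PowerSeries R} {x s : R}
    (hf : HasSum (fun k => PowerSeries.coeff k f * x ^ k) s) (p : R[X]) :
    HasSum (fun k => PowerSeries.coeff k (f * (p : PowerSeries R)) * x ^ k) (s * p.eval x) := by
  induction p using Polynomial.induction_on' with
  | add p q hp hq =>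
    simpa only [Polynomial.coe_add, mul_add, map_add, add_mul, eval_add] using hp.add hq
  | monomial n c =>
    have hcoe : ((monomial n c : R[X]) : PowerSeries R) = PowerSeries.C c * PowerSeries.X ^ n := by
      rw [← C_mul_X_pow_eq_monomial, Polynomial.coe_mul, Polynomial.coe_C, Polynomial.coe_pow,
        Polynomial.coe_X]
    have hlow : ∀ i ∈ Finset.range n,
        PowerSeries.coeff i (f * ((monomial n c : R[X]) : PowerSeries R)) * x ^ i = 0 := by
      intro i hi
      rw [hcoe, mul_left_comm, PowerSeries.coeff_C_mul, PowerSeries.coeff_mul_X_pow',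
        if_neg (by simpa using hi), mul_zero, zero_mul]
    rw [← hasSum_nat_add_iff' n, Finset.sum_eq_zero hlow, sub_zero, eval_monomial, mul_comm s]
    refine (hf.mul_left (c * x ^ n)).congr_fun fun k => ?_
    rw [hcoe, mul_left_comm, PowerSeries.coeff_C_mul, PowerSeries.coeff_mul_X_pow, pow_add]
    ring

/-- `(1 - x)^(-b-1) · wStep b c p = (x d/dx + c) ((1 - x)^(-b) · p)`. -/
noncomputable def wStep (b c : R) (p : R[X]) : R[X] :=
  X * (1 - X) * derivative p + (C b * X + C c * (1 - X)) * p

lemma coeff_wStep_succ (b c : R) (p : R[X]) (k : ℕ) :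
    (wStep b c p).coeff (k + 1) = (k + 1 + c) * p.coeff (k + 1) + (b - c - k) * p.coeff k := by
  have h : wStep b c p = X * derivative p - X * (X * derivative p) + C b * (X * p) + C c * p
      - C c * (X * p) := by
    rw [wStep]; ring
  rcases k with _ | k <;>
    simp only [h, coeff_add, coeff_sub, coeff_C_mul, coeff_X_mul, coeff_derivative, mul_coeff_zero,
      coeff_X_zero, Nat.cast_zero, Nat.cast_add, Nat.cast_one] <;>
    ring

lemma natDegree_wStep_le {p : R[X]} {n : ℕ} (hp : p.natDegree ≤ n) (b c : R) :
    (wStep b c p).natDegree ≤ n + 1 := by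
  refine natDegree_le_iff_coeff_eq_zero.2 fun N hN => ?_
  obtain ⟨k, rfl⟩ : ∃ k, N = k + 1 := Nat.exists_eq_add_one.2 (by omega)
  rw [coeff_wStep_succ, coeff_eq_zero_of_natDegree_lt (by omega),
    coeff_eq_zero_of_natDegree_lt (p := p) (n := k) (by omega)]
  ring

end CommRing

lemma eq_C_leadingCoeff_mul_prod_X_sub_C {K : Type*} [Field K] {n : ℕ} {p : K[X]}
    (hp : p.natDegree ≤ n) {z : Fin n → K} (hz : Function.Injective z)
    (hroot : ∀ i, p.IsRoot (z i)) : p = C p.leadingCoeff * ∏ i, (X - C (z i)) :=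
  eq_leadingCoeff_mul_of_monic_of_dvd_of_natDegree_le
    (monic_prod_of_monic _ _ fun i _ => monic_X_sub_C (z i))
    (Finset.prod_dvd_of_coprime (fun _ _ _ _ hij => pairwise_coprime_X_sub_C hz hij)
      fun i _ => dvd_iff_isRoot.2 (hroot i))
    (by simpa using hp)

lemma exists_strictMono_hasDerivAt_eq_zero {n : ℕ} {y : Fin (n + 2) → ℝ} (hy : StrictMono y)
    {f f' : ℝ → ℝ} (hf : ContinuousOn f (Icc (y 0) (y (Fin.last _))))
    (hf' : ∀ t ∈ Ioo (y 0) (y (Fin.last _)), HasDerivAt f (f' t) t) (hzero : ∀ i, f (y i) = 0) :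
    ∃ w : Fin (n + 1) → ℝ, StrictMono w ∧ (∀ i, w i ∈ Ioo (y 0) (y (Fin.last _))) ∧
      ∀ i, f' (w i) = 0 := by
  have hlo (i : Fin (n + 1)) : y 0 ≤ y i.castSucc := hy.monotone (Fin.zero_le _)
  have hhi (i : Fin (n + 1)) : y i.succ ≤ y (Fin.last _) := hy.monotone (Fin.le_last _)
  have hrolle (i : Fin (n + 1)) : ∃ t ∈ Ioo (y i.castSucc) (y i.succ), f' t = 0 :=
    exists_hasDerivAt_eq_zero (hy Fin.castSucc_lt_succ)
      (hf.mono (Icc_subset_Icc (hlo i) (hhi i))) (by rw [hzero, hzero])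
      fun t ht => hf' t (Ioo_subset_Ioo (hlo i) (hhi i) ht)
  choose w hw hw' using hrolle
  refine ⟨w, fun i j hij => ?_, fun i => Ioo_subset_Ioo (hlo i) (hhi i) (hw i), hw'⟩
  calc w i < y i.succ := (hw i).2
    _ ≤ y j.castSucc := hy.monotone (Fin.succ_le_castSucc_iff.2 hij)
    _ < w j := (hw j).1

lemma Fin.strictMono_snoc {α : Type*} [Preorder α] {n : ℕ} {f : Fin n → α} {x : α}
    (hf : StrictMono f) (hx : ∀ i, f i < x) : StrictMono (Fin.snoc f x : Fin (n + 1) → α) := by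
  rw [← Fin.insertNth_last', Fin.strictMono_insertNth_iff]
  exact ⟨hf, fun i _ => hx i, fun i hi => absurd hi (by simp)⟩

lemma asc_succ_left (b : ℝ) (k : ℕ) : asc b (k + 1) = b * asc (b + 1) k := by
  simp [asc, ascPochhammer_succ_left]

lemma asc_succ_right (b : ℝ) (k : ℕ) : asc b (k + 1) = asc b k * (b + k) := by
  simp [asc, ascPochhammer_succ_right]

lemma ring_choose_eq_asc_div_factorial (b : ℝ) (n : ℕ) :
    Ring.choose (b + n - 1) n = asc b n / n.factorial := by
  rw [eq_div_iff (by positivity), asc, ← Ring.multichoose_eq, mul_comm, ← nsmul_eq_mul,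
    Ring.factorial_nsmul_multichoose_eq_ascPochhammer, ascPochhammer_smeval_eq_eval]

lemma hasSum_asc_div_factorial_mul_pow (b : ℝ) {x : ℝ} (hx : |x| < 1) :
    HasSum (fun k => asc b k / k.factorial * x ^ k) ((1 - x) ^ (-b)) := by
  have h := (Real.one_div_one_sub_rpow_hasFPowerSeriesOnBall_zero b).hasSum
    (y := x) (by simpa [Metric.eball, edist_dist, Real.dist_eq] using hx)
  simpa [FormalMultilinearSeries.ofScalars_apply_eq, ring_choose_eq_asc_div_factorial,
    Real.rpow_neg (by linarith [(abs_lt.1 hx).2] : (0 : ℝ) ≤ 1 - x), mul_comm] using h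

/-- The Taylor series of `(1 - x)^(-b)` at `0`. -/
noncomputable def ascSeries (b : ℝ) : PowerSeries ℝ :=
  PowerSeries.mk fun k => asc b k / k.factorial

lemma derivative_ascSeries (b : ℝ) :
    PowerSeries.derivative ℝ (ascSeries b) = PowerSeries.C b * ascSeries (b + 1) := by
  ext k
  simp only [ascSeries, PowerSeries.coeff_derivative, PowerSeries.coeff_C_mul,
    PowerSeries.coeff_mk, asc_succ_left, Nat.factorial_succ]
  push_cast
  field_simp

lemma ascSeries_eq_one_sub_X_mul (b : ℝ) :
    ascSeries b = (1 - PowerSeries.X) * ascSeries (b + 1) := by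
  ext (_ | k)
  · simp [ascSeries, asc]
  · rw [sub_mul, one_mul, map_sub, PowerSeries.coeff_succ_X_mul]
    simp only [ascSeries, PowerSeries.coeff_mk, Nat.factorial_succ]
    rw [asc_succ_left b, asc_succ_right (b + 1)]
    push_cast
    field_simp
    ring

noncomputable def wPoly (a : ℝ) : {m : ℕ} → (Fin m → ℝ) → ℝ[X]
  | 0, _ => 1
  | m + 1, α => wStep (m + a) (α (Fin.last m)) (wPoly a (Fin.init α))

lemma mk_prod_eq_ascSeries_mul_wPoly (a : ℝ) {m : ℕ} (α : Fin m → ℝ) :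
    PowerSeries.mk (fun k => (∏ i, ((k : ℝ) + α i)) * (asc a k / k.factorial))
      = ascSeries (m + a) * (wPoly a α : PowerSeries ℝ) := by
  induction m with
  | zero => simp [ascSeries, wPoly]
  | succ m ih =>
    set b : ℝ := m + a
    set W := wPoly a (Fin.init α)
    have hstep : PowerSeries.mk (fun k => (∏ i, ((k : ℝ) + α i)) * (asc a k / k.factorial))
        = PowerSeries.X * PowerSeries.derivative ℝ (ascSeries b * (W : PowerSeries ℝ))
          + PowerSeries.C (α (Fin.last m)) * (ascSeries b * (W : PowerSeries ℝ)) := by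
      ext k
      rw [coeff_X_mul_derivative_add_C_mul, ← ih, PowerSeries.coeff_mk, PowerSeries.coeff_mk,
        Fin.prod_univ_castSucc]
      simp only [Fin.init]
      ring
    have hb : ((m + 1 : ℕ) : ℝ) + a = b + 1 := by push_cast; ring
    rw [hstep, hb, Derivation.leibniz, derivative_ascSeries, PowerSeries.derivative_coe,
      ascSeries_eq_one_sub_X_mul b, wPoly, wStep]
    simp only [smul_eq_mul, Polynomial.coe_add, Polynomial.coe_mul, Polynomial.coe_sub,
      Polynomial.coe_X, Polynomial.coe_C, Polynomial.coe_one]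
    ring

lemma hasSum_prod_mul_asc_mul_pow (a : ℝ) {m : ℕ} (α : Fin m → ℝ) {x : ℝ} (hx : |x| < 1) :
    HasSum (fun k : ℕ => (∏ i, ((k : ℝ) + α i)) * (asc a k / k.factorial) * x ^ k)
      ((1 - x) ^ (-((m : ℝ) + a)) * (wPoly a α).eval x) := by
  have h := HasSum.coeff_mul_coe_mul_pow (f := ascSeries (m + a))
    (by simpa only [ascSeries, PowerSeries.coeff_mk] using hasSum_asc_div_factorial_mul_pow _ hx)
    (wPoly a α)
  simpa only [← mk_prod_eq_ascSeries_mul_wPoly, PowerSeries.coeff_mk] using h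

lemma natDegree_wPoly_le (a : ℝ) {m : ℕ} (α : Fin m → ℝ) : (wPoly a α).natDegree ≤ m := by
  induction m with
  | zero => simp [wPoly]
  | succ m ih => exact natDegree_wStep_le (ih _) _ _

lemma hasDerivAt_rpow_mul_one_sub_rpow_mul_eval (p : ℝ[X]) (b c : ℝ) {t : ℝ}
    (ht : t ∈ Ioo (0 : ℝ) 1) :
    HasDerivAt (fun s => s ^ c * (1 - s) ^ (-b) * p.eval s)
      (t ^ (c - 1) * (1 - t) ^ (-b - 1) * (wStep b c p).eval t) t := by
  have ht0 : t ≠ 0 := ht.1.ne'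
  have ht1 : 1 - t ≠ 0 := (sub_pos.2 ht.2).ne'
  have hd := ((Real.hasDerivAt_rpow_const (p := c) (Or.inl ht0)).mul
    (((hasDerivAt_id t).const_sub 1).rpow_const (p := -b) (Or.inl ht1))).mul (p.hasDerivAt t)
  refine hd.congr_deriv ?_
  simp only [wStep, eval_add, eval_mul, eval_sub, eval_X, eval_C, eval_one, id, Pi.mul_apply]
  rw [show t ^ c = t ^ (c - 1) * t by rw [← Real.rpow_add_one ht0, sub_add_cancel],
    show (1 - t) ^ (-b) = (1 - t) ^ (-b - 1) * (1 - t) by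
      rw [← Real.rpow_add_one ht1, sub_add_cancel]]
  ring

lemma exists_strictMono_isRoot_wPoly (a : ℝ) {m : ℕ} (α : Fin m → ℝ) (hα : ∀ i, 0 < α i)
    (ham : a + m < 1) :
    ∃ z : Fin m → ℝ, StrictMono z ∧ (∀ i, z i ∈ Ioo 0 1) ∧ ∀ i, (wPoly a α).IsRoot (z i) := by
  induction m with
  | zero => exact ⟨Fin.elim0, fun i => i.elim0, fun i => i.elim0, fun i => i.elim0⟩
  | succ m ih =>
    push_cast at ham
    obtain ⟨z, hz, hz01, hroot⟩ := ih (Fin.init α) (fun i => hα _) (by linarith)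
    set c := α (Fin.last m)
    have hc : 0 < c := hα _
    have hb : 0 < -((m : ℝ) + a) := by linarith
    set W := wPoly a (Fin.init α)
    set G : ℝ → ℝ := fun s => s ^ c * (1 - s) ^ (-((m : ℝ) + a)) * W.eval s
    set y : Fin (m + 2) → ℝ := Fin.cons 0 (Fin.snoc z 1)
    have hy : StrictMono y := Fin.strictMono_cons.2
      ⟨Fin.lastCases (by simp) (fun i => by simpa using (hz01 i).1),
        Fin.strictMono_snoc hz fun i => (hz01 i).2⟩
    have hy0 : y 0 = 0 := rfl
    have hy1 : y (Fin.last _) = 1 := by simp [y, ← Fin.succ_last]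
    have hGy : ∀ i, G (y i) = 0 := by
      refine Fin.cases ?_ (Fin.lastCases ?_ fun i => ?_)
      · rw [hy0]
        simp only [G, Real.zero_rpow hc.ne', zero_mul]
      · rw [Fin.succ_last, hy1]
        simp only [G, sub_self, Real.zero_rpow hb.ne', mul_zero, zero_mul]
      · simpa [G, y] using Or.inr (hroot i)
    have hGcont : ContinuousOn G (Icc 0 1) := by
      refine Continuous.continuousOn ((Continuous.mul ?_ ?_).mul W.continuous)
      · exact Real.continuous_rpow_const hc.le
      · exact (Real.continuous_rpow_const hb.le).comp (continuous_const.sub continuous_id)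
    obtain ⟨w, hw, hw01, hGw⟩ := exists_strictMono_hasDerivAt_eq_zero hy (by rwa [hy0, hy1])
      (by rw [hy0, hy1]; exact fun t ht => hasDerivAt_rpow_mul_one_sub_rpow_mul_eval W _ c ht)
      hGy
    refine ⟨w, hw, by simpa [hy0, hy1] using hw01, fun i => ?_⟩
    have ht := hw01 i
    rw [hy0, hy1] at ht
    have hpos : 0 < w i ^ (c - 1) * (1 - w i) ^ (-((m : ℝ) + a) - 1) :=
      mul_pos (Real.rpow_pos_of_pos ht.1 _) (Real.rpow_pos_of_pos (sub_pos.2 ht.2) _)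
    exact (mul_eq_zero.1 (hGw i)).resolve_left hpos.ne'

theorem stmt_13_general (m : ℕ) (a : ℝ) (ham : a + m < 1)
    (α : Fin m → ℝ) (hα : ∀ i, 0 < α i)
    (w : Polynomial ℝ)
    (hw : ∀ x : ℝ, |x| < 1 →
      w.eval x = Real.rpow (1 - x) ((m : ℝ) + a) *
        ∑' k : ℕ, (∏ i, ((k : ℝ) + α i)) * (asc a k / (k.factorial : ℝ)) * x ^ k) :
    ∃ z : Fin m → ℝ, (∀ i, 0 < z i ∧ z i < 1) ∧
      w = C w.leadingCoeff * ∏ i, (X - C (z i)) := by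
  have hwW : w = wPoly a α := by
    refine eq_of_infinite_eval_eq _ _ ((Ioo_infinite (by norm_num : (-1 : ℝ) < 1)).mono
      fun x hx => ?_)
    have hx' : |x| < 1 := abs_lt.2 hx
    rw [mem_ofPred_eq, hw x hx', (hasSum_prod_mul_asc_mul_pow a α hx').tsum_eq, Real.rpow_eq_pow,
      ← mul_assoc, ← Real.rpow_add (by linarith [hx.2]), add_neg_cancel, Real.rpow_zero, one_mul]
  obtain ⟨z, hz, hz01, hroot⟩ := exists_strictMono_isRoot_wPoly a α hα ham
  subst hwW
  exact ⟨z, hz01, eq_C_leadingCoeff_mul_prod_X_sub_C (natDegree_wPoly_le a α) hz.injective hroot⟩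

theorem stmt_13 (m : ℕ) (hm : 1 ≤ m) (a : ℝ) (ham : a + m < 1)
    (α : Fin m → ℝ) (hα : ∀ i, 0 < α i)
    (w : Polynomial ℝ)
    (hw : ∀ x : ℝ, |x| < 1 →
      w.eval x = Real.rpow (1 - x) ((m : ℝ) + a) *
        ∑' k : ℕ, (∏ i, ((k : ℝ) + α i)) * (asc a k / (k.factorial : ℝ)) * x ^ k) :
    ∃ z : Fin m → ℝ, (∀ i, 0 < z i ∧ z i < 1) ∧
      w = C w.leadingCoeff * ∏ i, (X - C (z i)) :=
  stmt_13_general m a ham α hα w hw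
end

section
/- For d ≥ 2 and m ≥ 1, the d-Narayana polynomial N_{d,m}(x) := (1-x)^{md+1} · ∑_{n=0}^∞ [∏_{i=1}^{d} (m+i)_n / (i)_n] xⁿ is a polynomial of degree exactly (d-1)(m-1). -/
/-!
The `n`-th coefficient of the series is `P(n)` for the polynomial
`P(t) = ∏_{i<d} (t+i+1)_m / (i+1)_m` of degree `md`. For `deg P < n`, the coefficient
`h_N = ∑_{j ≤ N} (-1)^j C(n,j) P(N-j)` of `x^N` in `(1-x)^n ∑ P(k) x^k` equals, since the `n`-th
finite difference of `P` vanishes, minus the sum of the terms with `N < j ≤ n`, where `P` is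
evaluated at the negative integers `N - j`. Now `P` vanishes at `-1, …, -(m+d-1)` but not at
`-(m+d)`; with `n = md + 1` this kills `h_N` for `N > (d-1)(m-1)` and leaves exactly one nonzero
term, `j = n`, in `h_{(d-1)(m-1)}`.
-/

open Polynomial

open Finset

namespace Polynomial

theorem sum_range_neg_one_pow_mul_choose_mul_eval_sub {R : Type*} [CommRing R] {P : R[X]}
    {n : ℕ} (hP : P.natDegree < n) (t : R) :
    ∑ j ∈ range (n + 1), (-1) ^ j * n.choose j * P.eval (t - j) = 0 := by
  have h := congrFun (fwdDiff_iter_eq_zero_of_degree_lt hP) (t - n)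
  rw [fwdDiff_iter_eq_sum_shift, Pi.zero_apply] at h
  rw [← sum_range_reflect, ← h]
  refine sum_congr rfl fun j hj => ?_
  have hjn : j ≤ n := Nat.lt_succ_iff.mp (mem_range.mp hj)
  rw [add_tsub_cancel_right, Nat.choose_symm hjn, Nat.cast_sub hjn, zsmul_eq_mul, nsmul_eq_mul]
  push_cast
  ring_nf

/-- The coefficient of `x ^ N` in `(1 - x) ^ n * ∑ k, P(k) x ^ k`. -/
noncomputable def hStarCoeff (P : ℝ[X]) (n N : ℕ) : ℝ :=
  ∑ j ∈ range (N + 1), (-1) ^ j * n.choose j * P.eval ((N : ℝ) - j)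

theorem summable_eval_mul_pow (P : ℝ[X]) {x : ℝ} (hx : |x| < 1) :
    Summable fun k : ℕ => P.eval (k : ℝ) * x ^ k := by
  have hx' : ‖x‖ < 1 := by rwa [Real.norm_eq_abs]
  simp_rw [eval_eq_sum_range, sum_mul, mul_assoc]
  exact summable_sum fun i _ => (summable_pow_mul_geometric_of_norm_lt_one i hx').mul_left _

theorem one_sub_pow_mul_tsum_eval_mul_pow (P : ℝ[X]) (n : ℕ) {x : ℝ} (hx : |x| < 1) :
    (1 - x) ^ n * ∑' k : ℕ, P.eval (k : ℝ) * x ^ k = ∑' N : ℕ, P.hStarCoeff n N * x ^ N := by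
  set b : ℕ → ℝ := fun j => (-1) ^ j * n.choose j * x ^ j
  have hb : ∀ j ∉ range (n + 1), b j = 0 := fun j hj => by
    simp [b, Nat.choose_eq_zero_of_lt (not_lt.mp (mt mem_range.mpr hj))]
  have hb_tsum : (1 - x) ^ n = ∑' j, b j := by
    rw [tsum_eq_sum hb, sub_eq_neg_add, add_pow]
    exact sum_congr rfl fun j _ => by rw [one_pow, neg_pow]; ring
  have hb_norm : Summable fun j => ‖b j‖ :=
    summable_of_ne_finset_zero fun j hj => by rw [hb j hj, norm_zero]
  have hP_norm : Summable fun k : ℕ => ‖P.eval (k : ℝ) * x ^ k‖ := by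
    simpa only [Real.norm_eq_abs] using (summable_eval_mul_pow P hx).abs
  rw [hb_tsum, tsum_mul_tsum_eq_tsum_sum_range_of_summable_norm hb_norm hP_norm]
  refine tsum_congr fun N => ?_
  rw [hStarCoeff, sum_mul]
  refine sum_congr rfl fun j hj => ?_
  have hjN : j ≤ N := Nat.lt_succ_iff.mp (mem_range.mp hj)
  have hpow : x ^ N = x ^ j * x ^ (N - j) := by rw [← pow_add, Nat.add_sub_cancel' hjN]
  rw [Nat.cast_sub hjN, hpow]
  ring

theorem hStarCoeff_eq_neg_sum_Ico {P : ℝ[X]} {n : ℕ} (hP : P.natDegree < n) (N : ℕ) :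
    P.hStarCoeff n N =
      -∑ j ∈ Ico (N + 1) (n + 1), (-1) ^ j * n.choose j * P.eval ((N : ℝ) - j) := by
  have hΔ := sum_range_neg_one_pow_mul_choose_mul_eval_sub hP (N : ℝ)
  rcases le_or_gt N n with hNn | hnN
  · rw [← sum_range_add_sum_Ico _ (Nat.succ_le_succ hNn)] at hΔ
    exact eq_neg_of_add_eq_zero_left hΔ
  · rw [Ico_eq_empty_of_le (Nat.succ_le_succ hnN.le), sum_empty, neg_zero, ← hΔ, hStarCoeff]
    refine (sum_subset (range_subset_range.mpr (Nat.succ_le_succ hnN.le)) fun j _ hj => ?_).symm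
    rw [Nat.choose_eq_zero_of_lt (by simpa using hj), Nat.cast_zero, mul_zero, zero_mul]

section Roots

variable {P : ℝ[X]} {n r N : ℕ}

theorem eval_natCast_sub_eq_zero (hroots : ∀ k ∈ Icc 1 r, P.eval (-(k : ℝ)) = 0) {j : ℕ}
    (hNj : N < j) (hjr : j ≤ N + r) :
    P.eval ((N : ℝ) - j) = 0 := by
  rw [show (N : ℝ) - j = -((j - N : ℕ) : ℝ) by push_cast [Nat.cast_sub hNj.le]; ring]
  exact hroots _ (mem_Icc.mpr ⟨by omega, by omega⟩)

theorem hStarCoeff_eq_zero (hroots : ∀ k ∈ Icc 1 r, P.eval (-(k : ℝ)) = 0)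
    (hP : P.natDegree < n) (hN : n ≤ N + r) : P.hStarCoeff n N = 0 := by
  rw [hStarCoeff_eq_neg_sum_Ico hP, neg_eq_zero]
  refine sum_eq_zero fun j hj => ?_
  obtain ⟨hNj, hjn⟩ := mem_Ico.mp hj
  rw [eval_natCast_sub_eq_zero hroots hNj (by omega), mul_zero]

theorem hStarCoeff_eq_of_add_eq (hroots : ∀ k ∈ Icc 1 r, P.eval (-(k : ℝ)) = 0)
    (hP : P.natDegree < n) (hN : N + r + 1 = n) :
    P.hStarCoeff n N = (-1) ^ (n + 1) * P.eval (-((r : ℝ) + 1)) := by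
  rw [hStarCoeff_eq_neg_sum_Ico hP, sum_eq_single_of_mem n (mem_Ico.mpr ⟨by omega, by omega⟩)]
  · have hN' : (N : ℝ) - n = -((r : ℝ) + 1) := by rw [← hN]; push_cast; ring
    rw [Nat.choose_self, hN', pow_succ]
    ring
  · intro j hj hjn
    obtain ⟨hNj, hjn'⟩ := mem_Ico.mp hj
    rw [eval_natCast_sub_eq_zero hroots hNj (by omega), mul_zero]

end Roots

theorem natDegree_sum_range_C_mul_X_pow {R : Type*} [Semiring R] {c : ℕ → R} {K : ℕ}
    (hc : c K ≠ 0) :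
    (∑ k ∈ range (K + 1), C (c k) * X ^ k).natDegree = K := by
  refine natDegree_eq_of_le_of_coeff_ne_zero
    (natDegree_sum_le_of_forall_le _ _ fun k hk => ?_) ?_
  · exact (natDegree_C_mul_X_pow_le _ _).trans (Nat.lt_succ_iff.mp (mem_range.mp hk))
  · simpa [finsetSum_coeff, coeff_C_mul, coeff_X_pow] using hc

theorem natDegree_eq_of_eval_eq_one_sub_pow_mul_tsum {P Q : ℝ[X]} {n r K : ℕ}
    (hP : P.natDegree < n) (hroots : ∀ k ∈ Icc 1 r, P.eval (-(k : ℝ)) = 0)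
    (hne : P.eval (-((r : ℝ) + 1)) ≠ 0) (hK : K + r + 1 = n)
    (hQ : ∀ x : ℝ, |x| < 1 → Q.eval x = (1 - x) ^ n * ∑' k : ℕ, P.eval (k : ℝ) * x ^ k) :
    Q.natDegree = K := by
  have hQ_eq : Q = ∑ k ∈ range (K + 1), C (P.hStarCoeff n k) * X ^ k := by
    refine eq_of_infinite_eval_eq _ _ <|
      (Set.Ioo_infinite (by norm_num : (-1 : ℝ) < 1)).mono fun x hx => ?_
    have hx' : |x| < 1 := abs_lt.mpr hx
    simp only [Set.mem_ofPred_eq, eval_finsetSum, eval_mul, eval_C, eval_pow, eval_X]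
    rw [hQ x hx', one_sub_pow_mul_tsum_eval_mul_pow P n hx', tsum_eq_sum fun k hk => ?_]
    rw [hStarCoeff_eq_zero hroots hP (by simp only [mem_range] at hk; omega), zero_mul]
  rw [hQ_eq, natDegree_sum_range_C_mul_X_pow]
  rw [hStarCoeff_eq_of_add_eq hroots hP hK]
  exact mul_ne_zero (pow_ne_zero _ (by norm_num)) hne

end Polynomial

theorem asc_pos {a : ℝ} (ha : 0 < a) (n : ℕ) : 0 < asc a n := ascPochhammer_pos n a ha

theorem asc_add (a : ℝ) (m n : ℕ) : asc a (m + n) = asc a m * asc (a + m) n := by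
  simpa [asc, eval_comp] using (congrArg (eval a) (ascPochhammer_mul (S := ℝ) m n)).symm

theorem asc_eq_zero_iff (a : ℝ) (m : ℕ) : asc a m = 0 ↔ ∃ k < m, (k : ℝ) = -a :=
  ascPochhammer_eval_eq_zero_iff m a

/-- Both sides equal `(a)_{m+n} / ((a)_m (a)_n)`. -/
theorem asc_add_div_asc {a : ℝ} (ha : 0 < a) (m n : ℕ) :
    asc (a + m) n / asc a n = asc (a + n) m / asc a m := by
  have h := (asc_add a m n).symm.trans (add_comm m n ▸ asc_add a n m)
  rw [div_eq_div_iff (asc_pos ha n).ne' (asc_pos ha m).ne']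
  linear_combination h

/-- The `n`-th coefficient of the hypergeometric series, as a polynomial in `n`. -/
noncomputable def narayanaTermPoly (d m : ℕ) : ℝ[X] :=
  ∏ i ∈ range d, C (asc ((i : ℝ) + 1) m)⁻¹ * (ascPochhammer ℝ m).comp (X + C ((i : ℝ) + 1))

theorem eval_narayanaTermPoly (d m : ℕ) (t : ℝ) :
    (narayanaTermPoly d m).eval t =
      ∏ i ∈ range d, asc (t + (i + 1)) m / asc ((i : ℝ) + 1) m := by
  simp only [narayanaTermPoly, eval_prod, eval_mul, eval_C, eval_comp, eval_add, eval_X, asc,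
    div_eq_inv_mul]

theorem eval_natCast_narayanaTermPoly (d m n : ℕ) :
    (narayanaTermPoly d m).eval (n : ℝ) =
      ∏ i ∈ range d, asc ((m : ℝ) + i + 1) n / asc ((i : ℝ) + 1) n := by
  rw [eval_narayanaTermPoly]
  refine prod_congr rfl fun i _ => ?_
  rw [show (m : ℝ) + i + 1 = (i + 1) + m by ring, asc_add_div_asc (by positivity), add_comm]

theorem natDegree_narayanaTermPoly_le (d m : ℕ) : (narayanaTermPoly d m).natDegree ≤ m * d := by
  refine (natDegree_prod_le _ _).trans ?_
  refine (sum_le_sum fun i _ => (natDegree_C_mul_le _ _).trans_eq ?_).trans_eq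
    (by rw [sum_const, card_range, smul_eq_mul, mul_comm])
  rw [natDegree_comp, ascPochhammer_natDegree, natDegree_X_add_C, mul_one]

theorem eval_neg_natCast_narayanaTermPoly {d m k : ℕ} (hd : 0 < d) (hm : 0 < m)
    (hk : k ∈ Icc 1 (m + d - 1)) :
    (narayanaTermPoly d m).eval (-(k : ℝ)) = 0 := by
  obtain ⟨hk1, hkr⟩ := mem_Icc.mp hk
  rw [eval_narayanaTermPoly]
  -- the factor with `i = min (k - 1) (d - 1)` vanishes, as `k - 1 - i < m`
  refine prod_eq_zero (i := min (k - 1) (d - 1)) (mem_range.mpr (by omega)) ?_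
  rw [div_eq_zero_iff, asc_eq_zero_iff]
  refine Or.inl ⟨k - 1 - min (k - 1) (d - 1), by omega, ?_⟩
  push_cast [Nat.sub_sub, Nat.cast_sub (by omega : 1 + min (k - 1) (d - 1) ≤ k)]
  ring

theorem eval_neg_add_narayanaTermPoly_ne_zero (d m : ℕ) :
    (narayanaTermPoly d m).eval (-((m : ℝ) + d)) ≠ 0 := by
  rw [eval_narayanaTermPoly, prod_ne_zero_iff]
  intro i hi
  refine div_ne_zero (fun h => ?_) (asc_pos (by positivity) m).ne'
  obtain ⟨k, hkm, hk⟩ := (asc_eq_zero_iff _ _).mp h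
  have : k + i + 1 = m + d := by exact_mod_cast (by linarith : (k : ℝ) + i + 1 = m + d)
  have := mem_range.mp hi
  omega

theorem stmt_15 (d m : ℕ) (hd : 2 ≤ d) (hm : 1 ≤ m) (N : Polynomial ℝ)
    (hN : ∀ x : ℝ, |x| < 1 →
      N.eval x = (1 - x) ^ (m * d + 1) *
        ∑' n : ℕ, (∏ i ∈ Finset.range d,
          asc ((m : ℝ) + i + 1) n / asc ((i : ℝ) + 1) n) * x ^ n) :
    N.natDegree = (d - 1) * (m - 1) := by
  have hr : ((m + d - 1 : ℕ) : ℝ) + 1 = m + d := by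
    rw [Nat.cast_sub (by omega)]; push_cast; ring
  have hK : (d - 1) * (m - 1) + (m + d - 1) + 1 = m * d + 1 := by
    zify [hm, (by omega : 1 ≤ d), (by omega : 1 ≤ m + d)]; ring
  refine natDegree_eq_of_eval_eq_one_sub_pow_mul_tsum
    (Nat.lt_succ_of_le (natDegree_narayanaTermPoly_le d m))
    (fun _ => eval_neg_natCast_narayanaTermPoly (by omega) hm)
    (hr ▸ eval_neg_add_narayanaTermPoly_ne_zero d m) hK fun x hx => ?_
  simp only [hN x hx, eval_natCast_narayanaTermPoly]
end
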